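/- Let n be an odd positive integer and let a, b ∈ {1, −1}^n. The circulant matrices A = c(a) and B = c(b) satisfy A Aᵀ + B Bᵀ = (2n + 2) I − 2 J (I the identity and J the all-ones n×n matrix) if and only if (i) ∑_{s=0}^{n−1} a_s = 1 or −1, (ii) ∑_{s=0}^{n−1} b_s = 1 or −1, and (iii) a ⋆ a + b ⋆ b = (2n, −2, −2, …, −2). -/
import Mathlib


open Matrix

/-- The circulant matrix `c(a)` with entries `c(a)_{i,j} = a_{(j-i) mod n}`. -/
def circ {n : ℕ} (a : Fin n → ℝ) : Matrix (Fin n) (Fin n) ℝ :=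
  Matrix.of fun i j => a (j - i)

/-- Periodic autocorrelation of a vector `a ∈ ℝ^n`. -/
def autocorr {n : ℕ} (a : Fin n → ℝ) : Fin n → ℝ :=
  fun s => ∑ l, a l * a (l + s)

lemma circ_mul_transpose_apply {n : ℕ} [NeZero n] (a : Fin n → ℝ) (i j : Fin n) :
    (circ a * (circ a)ᵀ) i j = autocorr a (i - j) := by
  simp only [Matrix.mul_apply, Matrix.transpose_apply, circ, Matrix.of_apply, autocorr]
  rw [← Equiv.sum_comp (Equiv.addRight i)]
  refine Finset.sum_congr rfl fun l _ => ?_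
  simp only [Equiv.coe_addRight]
  have h1 : l + i - i = l := by abel
  have h2 : l + i - j = l + (i - j) := by abel
  rw [h1, h2]

lemma sum_autocorr {n : ℕ} [NeZero n] (a : Fin n → ℝ) : ∑ s, autocorr a s = (∑ s, a s) ^ 2 := by
  unfold autocorr
  rw [Finset.sum_comm, sq, Finset.sum_mul]
  refine Finset.sum_congr rfl fun l _ => ?_
  rw [← Finset.mul_sum]
  congr 1
  exact Equiv.sum_comp (Equiv.addLeft l) a

lemma int_sq_sum_two {z w : ℤ} (h : z ^ 2 + w ^ 2 = 2) : z = 1 ∨ z = -1 := by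
  have hz1 : -1 ≤ z := by nlinarith [sq_nonneg w]
  have hz2 : z ≤ 1 := by nlinarith [sq_nonneg w]
  have hw1 : -1 ≤ w := by nlinarith [sq_nonneg z]
  have hw2 : w ≤ 1 := by nlinarith [sq_nonneg z]
  interval_cases z <;> interval_cases w <;> simp_all <;> omega

lemma pm_one_sum_int {n : ℕ} (a : Fin n → ℝ) (ha : ∀ s, a s = 1 ∨ a s = -1) :
    ∃ z : ℤ, (z : ℝ) = ∑ s, a s := by
  refine ⟨∑ s, (if a s = 1 then 1 else -1 : ℤ), ?_⟩
  push_cast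
  refine Finset.sum_congr rfl fun s _ => ?_
  rcases ha s with h | h <;> simp [h] <;> norm_num

/-- Characterization of the two circulant cores of a Hadamard matrix: for `n` odd and
`a, b ∈ {±1}^n`, the circulant matrices `A = c(a)`, `B = c(b)` satisfy
`AAᵀ + BBᵀ = (2n+2)I - 2J` iff `∑ a_s = ±1`, `∑ b_s = ±1` and
`a ⋆ a + b ⋆ b = (2n, -2, …, -2)`. -/
theorem double_circulant_core_characterization {n : ℕ} [NeZero n] (hodd : Odd n)
    (a b : Fin n → ℝ) (ha : ∀ s, a s = 1 ∨ a s = -1) (hb : ∀ s, b s = 1 ∨ b s = -1) :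
    (circ a * (circ a)ᵀ + circ b * (circ b)ᵀ =
        ((2 * (n : ℝ) + 2)) • (1 : Matrix (Fin n) (Fin n) ℝ) -
          (2 : ℝ) • (Matrix.of fun _ _ => (1 : ℝ))) ↔
      (((∑ s, a s = 1) ∨ (∑ s, a s = -1)) ∧
        ((∑ s, b s = 1) ∨ (∑ s, b s = -1)) ∧
        (∀ s : Fin n, autocorr a s + autocorr b s =
          if s = 0 then 2 * (n : ℝ) else -2)) := by
  constructor
  · intro h
    have key : ∀ s : Fin n, autocorr a s + autocorr b s =
        if s = 0 then 2 * (n : ℝ) else -2 := by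
      intro s
      have h0 := congrFun (congrFun h s) 0
      simp only [Matrix.add_apply, Matrix.sub_apply, Matrix.smul_apply, Matrix.one_apply,
        Matrix.of_apply, smul_eq_mul, circ_mul_transpose_apply, sub_zero] at h0
      rw [h0]
      by_cases hs : s = 0 <;> simp [hs] <;> ring
    have hsum : (∑ s, a s) ^ 2 + (∑ s, b s) ^ 2 = 2 := by
      have := Finset.sum_congr rfl (fun s (_ : s ∈ Finset.univ) => key s)
      rw [Finset.sum_add_distrib, sum_autocorr, sum_autocorr] at this
      rw [this]
      have hcard : (Finset.univ : Finset (Fin n)).card = n := Finset.card_univ.trans (Fintype.card_fin n)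
      have : ∑ s : Fin n, (if s = 0 then 2 * (n : ℝ) else -2)
          = ∑ s : Fin n, ((if s = 0 then 2 * (n : ℝ) + 2 else 0) + (-2)) := by
        refine Finset.sum_congr rfl fun s _ => ?_
        by_cases hs : s = 0 <;> simp [hs] <;> ring
      rw [this, Finset.sum_add_distrib, Finset.sum_ite_eq' Finset.univ (0 : Fin n)]
      simp [hcard]
      ring
    obtain ⟨za, hza⟩ := pm_one_sum_int a ha
    obtain ⟨zb, hzb⟩ := pm_one_sum_int b hb
    have hz : za ^ 2 + zb ^ 2 = 2 := by
      have : ((za ^ 2 + zb ^ 2 : ℤ) : ℝ) = 2 := by push_cast; rw [hza, hzb]; exact hsum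
      exact_mod_cast this
    have hz' : zb ^ 2 + za ^ 2 = 2 := by linarith
    refine ⟨?_, ?_, key⟩
    · rcases int_sq_sum_two hz with h1 | h1 <;> [left; right] <;> rw [← hza, h1] <;> norm_num
    · rcases int_sq_sum_two hz' with h1 | h1 <;> [left; right] <;> rw [← hzb, h1] <;> norm_num
  · rintro ⟨-, -, key⟩
    ext i j
    simp only [Matrix.add_apply, Matrix.sub_apply, Matrix.smul_apply, Matrix.one_apply,
      Matrix.of_apply, smul_eq_mul, circ_mul_transpose_apply]
    rw [key (i - j)]
    have : i - j = 0 ↔ i = j := sub_eq_zero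
    by_cases hij : i = j <;> simp [this, hij] <;> ring
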